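/- arXiv:1803.05775 — 2 statements merged into one kernel-verified Lean document; each statement's English description precedes it below -/
import Mathlib

section
/- Let b be a word over {1,…,n} with leftmost letter 1 at position k and no letter 2 among b₁,…,b_{k−1}. Suppose among b_{k+1},…,bₘ there are exactly i−1 letters equal to 1. If i = 1, then the first row of the mixed insertion tableau of b begins with the entry 1 followed by an entry ≥ 2 that is not 2′; if i ≥ 2, then the first row contains exactly i unprimed 1's in positions (1,1),…,(1,i) and the entry at (1,i+1), if present, is not 2′. -/
/-!
Two invariants survive every bumping step. First, the tableau stays a shifted primed tableau;
this uses that a bumped value is always reinserted next to the cell it left (`Ready`).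
Second, row 0 starts with the `k` unprimed 1's inserted so far, these are the only 1's, and every
other nonempty cell has code at least `L` (the code of `upd2`). A cell is only ever overwritten by a smaller
value, so the 1's never move and a new 1 lands right after them. A primed entry is only created
when an unprimed `m` is bumped off the diagonal by something smaller. Before the first 1 the word
has no letters 1 or 2, so the first 1, which bumps `(0, 0)`, primes a letter `m ≥ 3`; afterwards
`(0, 0)` holds a 1 and every value inserted below row 0 is at least 2, so again `m ≥ 3`. Hence no
`2′` ever appears.
-/

/-- Update a tableau (a function with `0` denoting an empty cell; the letter
`k′` is encoded as `2k − 1` and `k` as `2k`) at a single cell. -/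
def upd2 (T : ℕ → ℕ → ℕ) (i j v : ℕ) : ℕ → ℕ → ℕ :=
  fun a b => if a = i ∧ b = j then v else T a b

/-- One bumping phase of Serrano's semistandard shifted mixed insertion, with
fuel.  `mixStep fuel N T true r v` inserts the value `v` into row `r` of `T`
(bumping the leftmost entry strictly greater than `v`); `mixStep fuel N T
false c v` inserts `v` into column `c` (bumping the topmost entry strictly
greater than `v`).  Unprimed bumped entries are inserted into the next row,
primed bumped entries into the next column, and an entry bumped from the main
diagonal is primed and inserted into the next column.  `N` bounds the search
range. -/
def mixStep : ℕ → ℕ → (ℕ → ℕ → ℕ) → Bool → ℕ → ℕ → (ℕ → ℕ → ℕ)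
  | 0, _, T, _, _, _ => T
  | fuel + 1, N, T, true, r, v =>
    match (List.range N).find? (fun j => decide (r ≤ j ∧ T r j ≠ 0 ∧ v < T r j)) with
    | none =>
      match (List.range N).find? (fun j => decide (r ≤ j ∧ T r j = 0)) with
      | none => T
      | some j => upd2 T r j v
    | some j =>
      if j = r then mixStep fuel N (upd2 T r j v) false (j + 1) (T r j - 1)
      else if T r j % 2 = 0 then mixStep fuel N (upd2 T r j v) true (r + 1) (T r j)
      else mixStep fuel N (upd2 T r j v) false (j + 1) (T r j)
  | fuel + 1, N, T, false, c, v =>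
    match (List.range N).find? (fun i => decide (T i c ≠ 0 ∧ v < T i c)) with
    | none =>
      match (List.range N).find? (fun i => decide (T i c = 0)) with
      | none => T
      | some i => upd2 T i c v
    | some i =>
      if T i c % 2 = 0 then mixStep fuel N (upd2 T i c v) true (i + 1) (T i c)
      else mixStep fuel N (upd2 T i c v) false (c + 1) (T i c)

/-- The mixed insertion tableau `P_HM(b)` of a word `b` over `{1,…,n}`:
insert the (unprimed) letters of `b` one by one. -/
def PHM (b : List ℕ) : ℕ → ℕ → ℕ :=
  b.foldl (fun T v => mixStep (b.length + 2) (b.length + 2) T true 0 (2 * v))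
    fun _ _ => 0

namespace MixedInsertion

variable {T : ℕ → ℕ → ℕ} {a b c i j k r v L N f : ℕ}

@[simp] theorem upd2_self : upd2 T a b v a b = v := by simp [upd2]

theorem upd2_of_ne {x y : ℕ} (h : x ≠ a ∨ y ≠ b) : upd2 T a b v x y = T x y := by
  simp only [upd2]; split_ifs <;> omega

structure IsPrimedTableau (T : ℕ → ℕ → ℕ) : Prop where
  le_of_ne_zero : ∀ a b, T a b ≠ 0 → a ≤ b
  left_ne_zero : ∀ a b, a ≤ b → T a (b + 1) ≠ 0 → T a b ≠ 0
  up_ne_zero : ∀ a b, T (a + 1) b ≠ 0 → T a b ≠ 0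
  row_le : ∀ a b, T a (b + 1) ≠ 0 →
    T a b ≤ T a (b + 1) ∧ (T a b % 2 = 1 → T a b ≠ T a (b + 1))
  col_le : ∀ a b, T (a + 1) b ≠ 0 →
    T a b ≤ T (a + 1) b ∧ (T a b % 2 = 0 → T a b ≠ T (a + 1) b)
  diag_even : ∀ a, T a a % 2 = 0

namespace IsPrimedTableau

theorem row_ne_zero (hT : IsPrimedTableau T) (ham : a ≤ c) (hcb : c ≤ b) (hb : T a b ≠ 0) :
    T a c ≠ 0 := by
  induction b, hcb using Nat.le_induction with
  | base => exact hb
  | succ b hcb ih => exact ih (hT.left_ne_zero a b (ham.trans hcb) hb)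

theorem row_mono (hT : IsPrimedTableau T) (hcb : c ≤ b) (hb : T a b ≠ 0) : T a c ≤ T a b := by
  by_cases hc : T a c = 0
  · omega
  have ham := hT.le_of_ne_zero a c hc
  induction b, hcb using Nat.le_induction with
  | base => exact le_rfl
  | succ b hcb ih =>
    exact (ih (hT.left_ne_zero a b (ham.trans hcb) hb)).trans (hT.row_le a b hb).1

theorem col_ne_zero (hT : IsPrimedTableau T) (hca : c ≤ a) (ha : T a b ≠ 0) : T c b ≠ 0 := by
  induction a, hca using Nat.le_induction with
  | base => exact ha
  | succ a _ ih => exact ih (hT.up_ne_zero a b ha)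

theorem col_mono (hT : IsPrimedTableau T) (hca : c ≤ a) (ha : T a b ≠ 0) : T c b ≤ T a b := by
  induction a, hca using Nat.le_induction with
  | base => exact le_rfl
  | succ a _ ih => exact (ih (hT.up_ne_zero a b ha)).trans (hT.col_le a b ha).1

theorem right_eq_zero_or_lt (hT : IsPrimedTableau T) (hodd : T a b % 2 = 1) :
    T a (b + 1) = 0 ∨ T a b < T a (b + 1) := by
  by_cases h : T a (b + 1) = 0
  · exact .inl h
  · have := hT.row_le a b h; omega

theorem below_eq_zero_or_lt (hT : IsPrimedTableau T) (heven : T a b % 2 = 0) :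
    T (a + 1) b = 0 ∨ T a b < T (a + 1) b := by
  by_cases h : T (a + 1) b = 0
  · exact .inl h
  · have := hT.col_le a b h; omega

theorem upd2_row_le (hT : IsPrimedTableau T) (hab : a ≤ b)
    (hleft : ∀ c, c + 1 = b → a ≤ c → T a c ≤ v ∧ (T a c % 2 = 1 → T a c ≠ v))
    (hcur : T a b = 0 ∨ v < T a b) (x y : ℕ) (hxy : upd2 T a b v x (y + 1) ≠ 0) :
    upd2 T a b v x y ≤ upd2 T a b v x (y + 1) ∧
      (upd2 T a b v x y % 2 = 1 → upd2 T a b v x y ≠ upd2 T a b v x (y + 1)) := by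
  revert hxy
  simp only [_root_.upd2]
  split_ifs with h₁ h₂ h₃
  · omega
  · obtain ⟨rfl, hy⟩ := h₁
    intro _
    by_cases hle : x ≤ y
    · exact hleft y hy hle
    · have : T x y = 0 := by_contra fun h => hle (hT.le_of_ne_zero x y h)
      omega
  · obtain ⟨rfl, rfl⟩ := h₃
    intro hr
    have := hT.row_le x y hr
    have := hT.left_ne_zero x y hab hr
    omega
  · exact hT.row_le x y

theorem upd2_col_le (hT : IsPrimedTableau T)
    (hup : ∀ c, c + 1 = a → T c b ≤ v ∧ (T c b % 2 = 0 → T c b ≠ v))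
    (hcur : T a b = 0 ∨ v < T a b) (x y : ℕ) (hxy : upd2 T a b v (x + 1) y ≠ 0) :
    upd2 T a b v x y ≤ upd2 T a b v (x + 1) y ∧
      (upd2 T a b v x y % 2 = 0 → upd2 T a b v x y ≠ upd2 T a b v (x + 1) y) := by
  revert hxy
  simp only [_root_.upd2]
  split_ifs with h₁ h₂ h₃
  · omega
  · obtain ⟨hx, rfl⟩ := h₁
    exact fun _ => hup x hx
  · obtain ⟨rfl, rfl⟩ := h₃
    intro hd
    have := hT.col_le x y hd
    have := hT.up_ne_zero x y hd
    omega
  · exact hT.col_le x y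

-- `hcur` takes care of the right and lower neighbours.
theorem upd2 (hT : IsPrimedTableau T) (hab : a ≤ b) (hv0 : v ≠ 0) (hdiag : a = b → v % 2 = 0)
    (hleft : ∀ c, c + 1 = b → a ≤ c →
      T a c ≠ 0 ∧ T a c ≤ v ∧ (T a c % 2 = 1 → T a c ≠ v))
    (hup : ∀ c, c + 1 = a → T c b ≠ 0 ∧ T c b ≤ v ∧ (T c b % 2 = 0 → T c b ≠ v))
    (hcur : T a b = 0 ∨ v < T a b) : IsPrimedTableau (upd2 T a b v) where
  le_of_ne_zero x y := by
    rcases em (x = a ∧ y = b) with ⟨rfl, rfl⟩ | h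
    · exact fun _ => hab
    · rw [upd2_of_ne (not_and_or.mp h)]; exact hT.le_of_ne_zero x y
  left_ne_zero x y hxy := by
    simp only [_root_.upd2]
    split_ifs with h₁ h₂ h₃
    · omega
    · obtain ⟨rfl, hy⟩ := h₁; exact fun _ => (hleft y hy hxy).1
    · exact fun _ => hv0
    · exact hT.left_ne_zero x y hxy
  up_ne_zero x y := by
    simp only [_root_.upd2]
    split_ifs with h₁ h₂ h₃
    · omega
    · obtain ⟨hx, rfl⟩ := h₁; exact fun _ => (hup x hx).1
    · exact fun _ => hv0
    · exact hT.up_ne_zero x y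
  row_le := hT.upd2_row_le hab (fun c hc hac => (hleft c hc hac).2) hcur
  col_le := hT.upd2_col_le (fun c hc => (hup c hc).2) hcur
  diag_even x := by
    rcases em (x = a ∧ x = b) with ⟨rfl, hxb⟩ | h
    · rw [← hxb, upd2_self]; exact hdiag hxb
    · rw [upd2_of_ne (not_and_or.mp h)]; exact hT.diag_even x

end IsPrimedTableau

theorem find?_range_decide_eq_some {P : ℕ → Prop} [DecidablePred P] :
    (List.range N).find? (fun m => decide (P m)) = some j ↔
      P j ∧ j < N ∧ ∀ m < j, ¬ P m := by
  simp

theorem find?_range_decide_eq_none {P : ℕ → Prop} [DecidablePred P] :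
    (List.range N).find? (fun m => decide (P m)) = none ↔ ∀ m < N, ¬ P m := by
  simp

def RowSlot (T : ℕ → ℕ → ℕ) (r v j : ℕ) : Prop :=
  r ≤ j ∧ (T r j = 0 ∨ v < T r j) ∧ ∀ m, r ≤ m → m < j → T r m ≠ 0 ∧ T r m ≤ v

def ColSlot (T : ℕ → ℕ → ℕ) (c v i : ℕ) : Prop :=
  (T i c = 0 ∨ v < T i c) ∧ ∀ y < i, T y c ≠ 0 ∧ T y c ≤ v

theorem mixStep_row_eq (hT : IsPrimedTableau T) (hs : RowSlot T r v j) (hjN : j < N) :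
    mixStep (f + 1) N T true r v =
      if T r j = 0 then upd2 T r j v
      else if j = r then mixStep f N (upd2 T r j v) false (j + 1) (T r j - 1)
      else if T r j % 2 = 0 then mixStep f N (upd2 T r j v) true (r + 1) (T r j)
      else mixStep f N (upd2 T r j v) false (j + 1) (T r j) := by
  obtain ⟨hrj, hcur, hbefore⟩ := hs
  by_cases hz : T r j = 0
  · have hbump :
        (List.range N).find? (fun m => decide (r ≤ m ∧ T r m ≠ 0 ∧ v < T r m)) = none := by
      rw [find?_range_decide_eq_none]
      intro m _ ⟨hrm, hm, hvm⟩
      rcases lt_or_ge m j with hmj | hjm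
      · have := hbefore m hrm hmj; omega
      · exact hT.row_ne_zero hrj hjm hm hz
    have hfree : (List.range N).find? (fun m => decide (r ≤ m ∧ T r m = 0)) = some j := by
      rw [find?_range_decide_eq_some]
      exact ⟨⟨hrj, hz⟩, hjN, fun m hmj ⟨hrm, hm⟩ => (hbefore m hrm hmj).1 hm⟩
    rw [mixStep, hbump, hfree, if_pos hz]
  · have hbump : (List.range N).find? (fun m => decide (r ≤ m ∧ T r m ≠ 0 ∧ v < T r m)) =
        some j := by
      rw [find?_range_decide_eq_some]
      refine ⟨⟨hrj, hz, by omega⟩, hjN, fun m hmj ⟨hrm, _, hvm⟩ => ?_⟩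
      have := hbefore m hrm hmj; omega
    rw [mixStep, hbump, if_neg hz]

theorem mixStep_row_eq_self (hT : IsPrimedTableau T) (h : ∀ j < N, ¬ RowSlot T r v j) :
    mixStep (f + 1) N T true r v = T := by
  rw [mixStep]
  split
  · next hbump =>
    split
    · rfl
    · next j hfree =>
      rw [find?_range_decide_eq_none] at hbump
      rw [find?_range_decide_eq_some] at hfree
      obtain ⟨⟨hrj, hz⟩, hjN, hmin⟩ := hfree
      refine absurd ⟨hrj, .inl hz, fun m hrm hmj => ?_⟩ (h j hjN)
      have hm : T r m ≠ 0 := fun h0 => hmin m hmj ⟨hrm, h0⟩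
      exact ⟨hm, by have := hbump m (by omega); omega⟩
  · next j hbump =>
    rw [find?_range_decide_eq_some] at hbump
    obtain ⟨⟨hrj, hj, hvj⟩, hjN, hmin⟩ := hbump
    refine absurd ⟨hrj, .inr hvj, fun m hrm hmj => ?_⟩ (h j hjN)
    have hm := hT.row_ne_zero hrm hmj.le hj
    exact ⟨hm, by have := hmin m hmj; omega⟩

theorem mixStep_col_eq (hT : IsPrimedTableau T) (hs : ColSlot T c v i) (hiN : i < N) :
    mixStep (f + 1) N T false c v =
      if T i c = 0 then upd2 T i c v
      else if T i c % 2 = 0 then mixStep f N (upd2 T i c v) true (i + 1) (T i c)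
      else mixStep f N (upd2 T i c v) false (c + 1) (T i c) := by
  obtain ⟨hcur, hbefore⟩ := hs
  by_cases hz : T i c = 0
  · have hbump : (List.range N).find? (fun y => decide (T y c ≠ 0 ∧ v < T y c)) = none := by
      rw [find?_range_decide_eq_none]
      intro y _ ⟨hy, hvy⟩
      rcases lt_or_ge y i with hyi | hiy
      · have := hbefore y hyi; omega
      · exact hT.col_ne_zero hiy hy hz
    have hfree : (List.range N).find? (fun y => decide (T y c = 0)) = some i := by
      rw [find?_range_decide_eq_some]
      exact ⟨hz, hiN, fun y hyi => (hbefore y hyi).1⟩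
    rw [mixStep, hbump, hfree, if_pos hz]
  · have hbump : (List.range N).find? (fun y => decide (T y c ≠ 0 ∧ v < T y c)) = some i := by
      rw [find?_range_decide_eq_some]
      refine ⟨⟨hz, by omega⟩, hiN, fun y hyi ⟨_, hvy⟩ => ?_⟩
      have := hbefore y hyi; omega
    rw [mixStep, hbump, if_neg hz]

theorem mixStep_col_eq_self (hT : IsPrimedTableau T) (h : ∀ i < N, ¬ ColSlot T c v i) :
    mixStep (f + 1) N T false c v = T := by
  rw [mixStep]
  split
  · next hbump =>
    split
    · rfl
    · next i hfree =>
      rw [find?_range_decide_eq_none] at hbump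
      rw [find?_range_decide_eq_some] at hfree
      obtain ⟨hz, hiN, hmin⟩ := hfree
      refine absurd ⟨.inl hz, fun y hyi => ⟨hmin y hyi, ?_⟩⟩ (h i hiN)
      have := hbump y (by omega); have := hmin y hyi; omega
  · next i hbump =>
    rw [find?_range_decide_eq_some] at hbump
    obtain ⟨⟨hi, hvi⟩, hiN, hmin⟩ := hbump
    refine absurd ⟨.inr hvi, fun y hyi => ?_⟩ (h i hiN)
    have hy := hT.col_ne_zero hyi.le hi
    exact ⟨hy, by have := hmin y hyi; omega⟩

def FitsBelow (T : ℕ → ℕ → ℕ) (r v : ℕ) : Prop :=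
  ∃ j, r < j ∧ T r j ≠ 0 ∧ (T (r + 1) j = 0 ∨ v < T (r + 1) j) ∧ ∀ m ≤ j, T r m < v

def FitsRight (T : ℕ → ℕ → ℕ) (c v : ℕ) : Prop :=
  ∃ x, T x c ≠ 0 ∧ (T x (c + 1) = 0 ∨ v < T x (c + 1)) ∧ ∀ y ≤ x, T y c < v

-- The calls `mixStep _ _ T mode x v` made while inserting a letter: a value inserted into row
-- `r + 1` (column `c + 1`) was bumped from row `r` (column `c`), which it therefore fits below
-- (to the right of).
def Ready (T : ℕ → ℕ → ℕ) : Bool → ℕ → ℕ → Prop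
  | true, 0, v => v % 2 = 0
  | true, r + 1, v => v % 2 = 0 ∧ FitsBelow T r v
  | false, 0, _ => False
  | false, c + 1, v => v % 2 = 1 ∧ FitsRight T c v

theorem Ready.row_even (h : Ready T true r v) : v % 2 = 0 := by
  cases r
  exacts [h, h.1]

theorem Ready.above_rowSlot (hT : IsPrimedTableau T) (h : Ready T true r v)
    (hs : RowSlot T r v j) : ∀ y < r, T y j ≠ 0 ∧ T y j < v := by
  cases r with
  | zero => exact fun y hy => absurd hy (Nat.not_lt_zero y)
  | succ r =>
    obtain ⟨j₀, hrj₀, hj₀, hcur, hlt⟩ := h.2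
    have hjj₀ : j ≤ j₀ := by
      by_contra hj₀j
      have := hs.2.2 j₀ hrj₀ (by omega)
      omega
    have hrj : T r j ≠ 0 := hT.row_ne_zero (by have := hs.1; omega) hjj₀ hj₀
    intro y hy
    exact ⟨hT.col_ne_zero (by omega) hrj, (hT.col_mono (by omega) hrj).trans_lt (hlt j hjj₀)⟩

theorem FitsRight.left_colSlot (hT : IsPrimedTableau T) (h : FitsRight T c v)
    (hs : ColSlot T (c + 1) v i) : T i c ≠ 0 ∧ T i c < v := by
  obtain ⟨x, hx, hcur, hlt⟩ := h
  have hix : i ≤ x := by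
    by_contra hxi
    have := hs.2 x (by omega)
    omega
  exact ⟨hT.col_ne_zero hix hx, hlt i hix⟩

theorem RowSlot.isPrimedTableau_upd2 (hs : RowSlot T r v j) (hT : IsPrimedTableau T)
    (hv : v % 2 = 0) (hv0 : v ≠ 0) (habove : ∀ y < r, T y j ≠ 0 ∧ T y j < v) :
    IsPrimedTableau (upd2 T r j v) :=
  hT.upd2 hs.1 hv0 (fun _ => hv)
    (fun m hm hrm => by have := hs.2.2 m hrm (by omega); omega)
    (fun y hy => by have := habove y (by omega); omega) hs.2.1

theorem ColSlot.isPrimedTableau_upd2 (hs : ColSlot T (c + 1) v i) (hT : IsPrimedTableau T)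
    (hv : v % 2 = 1) (hleft : T i c ≠ 0 ∧ T i c < v) :
    IsPrimedTableau (upd2 T i (c + 1) v) := by
  have hic := hT.le_of_ne_zero i c hleft.1
  refine hT.upd2 (by omega) (by omega) (by omega) (fun m hm _ => ?_)
    (fun y hy => by have := hs.2 y (by omega); omega) hs.1
  obtain rfl : m = c := by omega
  omega

theorem ready_after_bump_diag (hT : IsPrimedTableau T) (hv : v % 2 = 0) (hv0 : v ≠ 0)
    (hvw : v < T a a) (habove : ∀ y < a, T y a < v) :
    Ready (upd2 T a a v) false (a + 1) (T a a - 1) := by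
  have hw := hT.diag_even a
  refine ⟨by omega, a, by simpa using hv0, ?_, fun y hy => ?_⟩
  · rw [upd2_of_ne (.inr (by omega))]
    by_cases h : T a (a + 1) = 0
    · exact .inl h
    · have := hT.row_le a a h; omega
  · rcases hy.lt_or_eq with hy | rfl
    · rw [upd2_of_ne (.inl hy.ne)]; have := habove y hy; omega
    · rw [upd2_self]; omega

theorem ready_after_bump_odd (hT : IsPrimedTableau T) (hv0 : v ≠ 0) (hvw : v < T a b)
    (hodd : T a b % 2 = 1) (habove : ∀ y < a, T y b < T a b) :
    Ready (upd2 T a b v) false (b + 1) (T a b) := by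
  refine ⟨hodd, a, by simpa using hv0, ?_, fun y hy => ?_⟩
  · rw [upd2_of_ne (.inr (by omega))]
    exact hT.right_eq_zero_or_lt hodd
  · rcases hy.lt_or_eq with hy | rfl
    · rw [upd2_of_ne (.inl hy.ne)]; exact habove y hy
    · rwa [upd2_self]

theorem ready_after_bump_even (hT : IsPrimedTableau T) (hab : a < b) (hv0 : v ≠ 0)
    (hvw : v < T a b) (heven : T a b % 2 = 0) (hleft : ∀ m < b, T a m < T a b) :
    Ready (upd2 T a b v) true (a + 1) (T a b) := by
  refine ⟨heven, b, hab, by simpa using hv0, ?_, fun m hm => ?_⟩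
  · rw [upd2_of_ne (.inl (by omega))]
    exact hT.below_eq_zero_or_lt heven
  · rcases hm.lt_or_eq with hm | rfl
    · rw [upd2_of_ne (.inr hm.ne)]; exact hleft m hm
    · rwa [upd2_self]

-- Code `2` is an unprimed 1; with `L = 4` neither `1′` nor `2′` (codes 1 and 3) occurs.
structure LeadingOnes (L k : ℕ) (T : ℕ → ℕ → ℕ) : Prop extends IsPrimedTableau T where
  eq_zero_or_eq_two_or_ge : ∀ a b, T a b = 0 ∨ T a b = 2 ∨ L ≤ T a b
  two_of_lt : ∀ m < k, T 0 m = 2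
  lt_of_eq_two : ∀ a b, T a b = 2 → a = 0 ∧ b < k

theorem leadingOnes_zero : LeadingOnes L 0 fun _ _ => 0 := by
  refine ⟨⟨?_, ?_, ?_, ?_, ?_, ?_⟩, ?_, ?_, ?_⟩ <;> simp

namespace LeadingOnes

theorem mono {L' : ℕ} (h : LeadingOnes L k T) (hL : L' ≤ L) : LeadingOnes L' k T :=
  { h with
    eq_zero_or_eq_two_or_ge := fun a b => by have := h.eq_zero_or_eq_two_or_ge a b; omega }

theorem upd2_of_le (h : LeadingOnes L k T) (hT' : IsPrimedTableau (upd2 T a b v)) (hL : 2 < L)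
    (hLv : L ≤ v) (hcur : T a b = 0 ∨ v < T a b) : LeadingOnes L k (upd2 T a b v) where
  toIsPrimedTableau := hT'
  eq_zero_or_eq_two_or_ge x y := by
    simp only [_root_.upd2]; split_ifs
    · omega
    · exact h.eq_zero_or_eq_two_or_ge x y
  two_of_lt m hm := by
    have h2 := h.two_of_lt m hm
    have hne : 0 ≠ a ∨ m ≠ b := by
      by_contra! hab
      obtain ⟨rfl, rfl⟩ := hab
      omega
    rw [upd2_of_ne hne, h2]
  lt_of_eq_two x y := by
    simp only [_root_.upd2]; split_ifs
    · omega
    · exact h.lt_of_eq_two x y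

theorem upd2_two (h : LeadingOnes L k T) (hT' : IsPrimedTableau (upd2 T 0 k 2)) :
    LeadingOnes L (k + 1) (upd2 T 0 k 2) where
  toIsPrimedTableau := hT'
  eq_zero_or_eq_two_or_ge x y := by
    simp only [_root_.upd2]; split_ifs
    · omega
    · exact h.eq_zero_or_eq_two_or_ge x y
  two_of_lt m hm := by
    by_cases hmk : m = k
    · rw [hmk, upd2_self]
    · rw [upd2_of_ne (.inr hmk)]
      exact h.two_of_lt m (by omega)
  lt_of_eq_two x y := by
    simp only [_root_.upd2]; split_ifs with hxy
    · omega
    · intro hxy2; have := h.lt_of_eq_two x y hxy2; omega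

theorem eq_zero_or_ge_after_ones (h : LeadingOnes L k T) : T 0 k = 0 ∨ L ≤ T 0 k := by
  rcases h.eq_zero_or_eq_two_or_ge 0 k with h0 | h2 | hge
  · exact .inl h0
  · exact absurd (h.lt_of_eq_two 0 k h2).2 (lt_irrefl k)
  · exact .inr hge

theorem mixStep_row_succ (hL : 2 < L)
    (ih : ∀ {T mode x w}, LeadingOnes L k T → Ready T mode x w → L ≤ w →
      LeadingOnes L k (mixStep f N T mode x w))
    (h : LeadingOnes L k T) (hR : Ready T true r v) (hLv : L ≤ v) :
    LeadingOnes L k (mixStep (f + 1) N T true r v) := by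
  have hT := h.toIsPrimedTableau
  by_cases hex : ∃ j < N, RowSlot T r v j
  · obtain ⟨j, hjN, hs⟩ := hex
    have ⟨hrj, hcur, hbefore⟩ := hs
    have hv := hR.row_even
    have habove := hR.above_rowSlot hT hs
    have h' := h.upd2_of_le (hs.isPrimedTableau_upd2 hT hv (by omega) habove) hL hLv hcur
    rw [mixStep_row_eq hT hs hjN]
    split_ifs with hz hjr heven
    · exact h'
    · subst hjr
      have := hT.diag_even j
      exact ih h' (ready_after_bump_diag hT hv (by omega) (by omega)
        fun y hy => (habove y hy).2) (by omega)
    · refine ih h' (ready_after_bump_even hT (by omega) (by omega) (by omega) heven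
        fun m hm => ?_) (by omega)
      by_cases hrm : r ≤ m
      · have := hbefore m hrm hm; omega
      · have : T r m = 0 := by_contra fun h0 => hrm (hT.le_of_ne_zero r m h0)
        omega
    · exact ih h' (ready_after_bump_odd hT (by omega) (by omega) (by omega)
        fun y hy => by have := habove y hy; omega) (by omega)
  · rw [mixStep_row_eq_self hT fun j hjN hs => hex ⟨j, hjN, hs⟩]
    exact h

theorem mixStep_col_succ (hL : 2 < L)
    (ih : ∀ {T mode x w}, LeadingOnes L k T → Ready T mode x w → L ≤ w →
      LeadingOnes L k (mixStep f N T mode x w))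
    (h : LeadingOnes L k T) (hR : Ready T false c v) (hLv : L ≤ v) :
    LeadingOnes L k (mixStep (f + 1) N T false c v) := by
  have hT := h.toIsPrimedTableau
  obtain _ | c := c
  · exact hR.elim
  obtain ⟨hv, hfit⟩ := hR
  by_cases hex : ∃ i < N, ColSlot T (c + 1) v i
  · obtain ⟨i, hiN, hs⟩ := hex
    have ⟨hcur, hbefore⟩ := hs
    have hleft := hfit.left_colSlot hT hs
    have hic := hT.le_of_ne_zero i c hleft.1
    have h' := h.upd2_of_le (hs.isPrimedTableau_upd2 hT hv hleft) hL hLv hcur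
    rw [mixStep_col_eq hT hs hiN]
    split_ifs with hz heven
    · exact h'
    · refine ih h' (ready_after_bump_even hT (by omega) (by omega) (by omega) heven
        fun m hm => ?_) (by omega)
      have := hT.row_mono (show m ≤ c by omega) hleft.1
      omega
    · exact ih h' (ready_after_bump_odd hT (by omega) (by omega) (by omega)
        fun y hy => by have := hbefore y hy; omega) (by omega)
  · rw [mixStep_col_eq_self hT fun i hiN hs => hex ⟨i, hiN, hs⟩]
    exact h

theorem mixStep_of_ready (hL : 2 < L) : ∀ (f : ℕ) {T : ℕ → ℕ → ℕ} {mode x v},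
    LeadingOnes L k T → Ready T mode x v → L ≤ v → LeadingOnes L k (mixStep f N T mode x v)
  | 0, _, _, _, _, h, _, _ => h
  | f + 1, _, true, _, _, h, hR, hLv => mixStep_row_succ hL (mixStep_of_ready hL f) h hR hLv
  | f + 1, _, false, _, _, h, hR, hLv => mixStep_col_succ hL (mixStep_of_ready hL f) h hR hLv

theorem insert_one (h : LeadingOnes L k T) (hL : 4 ≤ L) (hk0 : k = 0 → 5 ≤ L) (hkN : k < N) :
    LeadingOnes 4 (k + 1) (mixStep (f + 1) N T true 0 2) := by
  have hT := h.toIsPrimedTableau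
  have hnext := h.eq_zero_or_ge_after_ones
  have hnone : ∀ y < 0, T y k ≠ 0 ∧ T y k < 2 := fun y hy => absurd hy (Nat.not_lt_zero y)
  have hs : RowSlot T 0 2 k :=
    ⟨k.zero_le, by omega, fun m _ hm => by rw [h.two_of_lt m hm]; omega⟩
  have h' : LeadingOnes 4 (k + 1) (upd2 T 0 k 2) :=
    (h.mono hL).upd2_two (hs.isPrimedTableau_upd2 hT rfl two_ne_zero hnone)
  rw [mixStep_row_eq hT hs hkN]
  split_ifs with hz hk heven
  · exact h'
  · subst hk
    have := hk0 rfl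
    exact h'.mixStep_of_ready (by norm_num) f
      (ready_after_bump_diag hT rfl two_ne_zero (by omega) fun y hy => (hnone y hy).2) (by omega)
  · exact h'.mixStep_of_ready (by norm_num) f (ready_after_bump_even hT (by omega) two_ne_zero
      (by omega) heven fun m hm => by rw [h.two_of_lt m hm]; omega) (by omega)
  · exact h'.mixStep_of_ready (by norm_num) f (ready_after_bump_odd hT two_ne_zero (by omega)
      (by omega) fun y hy => (hnone y hy).2.trans (by omega)) (by omega)

theorem foldl_insert_of_le (hL : 2 < L) : ∀ (l : List ℕ) {T : ℕ → ℕ → ℕ},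
    LeadingOnes L k T → (∀ a ∈ l, L ≤ 2 * a) →
    LeadingOnes L k (l.foldl (fun T a => mixStep f N T true 0 (2 * a)) T)
  | [], _, h, _ => h
  | a :: l, _, h, hl =>
    foldl_insert_of_le hL l (h.mixStep_of_ready hL f (Nat.mul_mod_right 2 a) (hl a (by simp)))
      fun b hb => hl b (by simp [hb])

theorem foldl_insert : ∀ (l : List ℕ) {k : ℕ} {T : ℕ → ℕ → ℕ},
    LeadingOnes 4 k T → 0 < k → (∀ a ∈ l, 1 ≤ a) → k + l.count 1 < N →
    LeadingOnes 4 (k + l.count 1) (l.foldl (fun T a => mixStep (f + 1) N T true 0 (2 * a)) T)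
  | [], _, _, h, _, _, _ => h
  | a :: l, k, _, h, hk, hl, hN => by
    have hl' : ∀ b ∈ l, 1 ≤ b := fun b hb => hl b (by simp [hb])
    rw [List.foldl_cons]
    by_cases ha : a = 1
    · subst ha
      rw [List.count_cons_self] at hN ⊢
      rw [show k + (l.count 1 + 1) = k + 1 + l.count 1 by omega]
      exact foldl_insert l (h.insert_one le_rfl (by omega) (by omega)) (by omega) hl' (by omega)
    · rw [List.count_cons_of_ne ha] at hN ⊢
      have := hl a (by simp)
      exact foldl_insert l (h.mixStep_of_ready (by norm_num) (f + 1) (Nat.mul_mod_right 2 a)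
        (by omega)) hk hl' hN

end LeadingOnes

theorem leadingOnes_PHM {p s : List ℕ} (hp : ∀ a ∈ p, 3 ≤ a) (hs : ∀ a ∈ s, 1 ≤ a) :
    LeadingOnes 4 (1 + s.count 1) (PHM (p ++ 1 :: s)) := by
  have hcount : s.count 1 ≤ s.length := List.count_le_length
  have hlen : (p ++ 1 :: s).length = p.length + s.length + 1 := by simp; omega
  obtain ⟨f, hf⟩ : ∃ f, (p ++ 1 :: s).length + 2 = f + 1 := ⟨_, rfl⟩
  rw [PHM, hf, List.foldl_append, List.foldl_cons]
  have hA := LeadingOnes.foldl_insert_of_le (f := f + 1) (N := f + 1) (by norm_num) p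
    (leadingOnes_zero (L := 5)) fun a ha => by have := hp a ha; omega
  exact (hA.insert_one (by norm_num) (fun _ => le_rfl) (by omega)).foldl_insert s one_pos hs
    (by omega)

end MixedInsertion

/-- Let `b = p ++ 1 :: s` where `p` contains no `1` and no `2` (so the
displayed `1` is the leftmost `1` of `b` and no `2` precedes it) and let
`i − 1` be the number of `1`'s in `s`.  If `i = 1`, the first row of
`P_HM(b)` starts with an unprimed `1` followed (if present) by an entry that
is at least `2` and is not `2′`; if `i ≥ 2`, it has exactly `i` unprimed `1`'s
in positions `(1,1),…,(1,i)` and the next entry (if present) is not `2′` (and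
not another `1`). -/
theorem stmt10 (n : ℕ) (p s : List ℕ) (i : ℕ) (hi : 1 ≤ i)
    (hletters : ∀ x ∈ p ++ 1 :: s, 1 ≤ x ∧ x ≤ n)
    (hp1 : 1 ∉ p) (hp2 : 2 ∉ p) (hcount : s.count 1 = i - 1) :
    (i = 1 → (PHM (p ++ 1 :: s)) 0 0 = 2 ∧
      ((PHM (p ++ 1 :: s)) 0 1 ≠ 0 → 4 ≤ (PHM (p ++ 1 :: s)) 0 1)) ∧
    (2 ≤ i → (∀ j, j < i → (PHM (p ++ 1 :: s)) 0 j = 2) ∧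
      (PHM (p ++ 1 :: s)) 0 i ≠ 2 ∧ (PHM (p ++ 1 :: s)) 0 i ≠ 3) := by
  have hp : ∀ a ∈ p, 3 ≤ a := fun a ha => by
    have := (hletters a (List.mem_append_left _ ha)).1
    have : a ≠ 1 := fun h => hp1 (h ▸ ha)
    have : a ≠ 2 := fun h => hp2 (h ▸ ha)
    omega
  have h := MixedInsertion.leadingOnes_PHM hp fun a ha =>
    (hletters a (List.mem_append_right p (List.mem_cons_of_mem 1 ha))).1
  rw [show 1 + s.count 1 = i by omega] at h
  refine ⟨fun hi1 => ⟨h.two_of_lt 0 (by omega), fun hne => ?_⟩,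
    fun hi2 => ⟨fun j hj => h.two_of_lt j hj, fun h2 => ?_, fun h3 => ?_⟩⟩
  · have := h.eq_zero_or_eq_two_or_ge 0 1
    have := h.lt_of_eq_two 0 1
    omega
  · exact absurd (h.lt_of_eq_two 0 i h2).2 (lt_irrefl i)
  · have := h.eq_zero_or_eq_two_or_ge 0 i
    omega
end

section
/- In the q(n)-lowest weight primed tableau of shape λ — the tableau in which for each i the cells with entries (n−l+i) or (n−l+i)′ form a connected border strip of size λ_{l−i+1} starting at the diagonal cell (i,i) with unprimed value n−l+i (where l = l(λ)) — the entries are uniquely determined by these conditions, and the resulting filling is a valid primed tableau of shape λ with weight (0,…,0, λₗ, λ_{l−1}, …, λ₁). -/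
/-!
Let `L` be the length of `λ` and `m t` the number of parts of `λ` exceeding `t`. The lowest
tableau puts the letter `n + 1 + r - m (c - r)` in cell `(r, c)`, primed exactly when the cell
below carries the same letter. Its strip of letter `n - L + i` meets each diagonal `c - r = d`
with `d < λ_{L-i}` exactly once, which gives the size of the strip, its connectedness and the
weight.

Conversely, for any tableau with the border strip conditions, induction on `i` shows that the
cells with letter at most `n - L + i` form the shifted diagram of `(λ_{L-i}, λ_{L-i+1}, …)`:
the next strip lies between two shifted diagrams, the absence of `2 × 2` squares bounds each of
its rows by the boundary of the row above, and counting its cells together with connectedness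
to the diagonal cell forces equality in every row. Once the letters are known, the primes are
forced as well.
-/

/-- Cell `(i,j)` (0-based) lies in the shifted diagram of the strict partition
`lam`: `i ≤ j < λᵢ + i`. -/
def InShape (lam : List ℕ) (i j : ℕ) : Prop :=
  i < lam.length ∧ i ≤ j ∧ j < lam.getD i 0 + i

instance (lam : List ℕ) (i j : ℕ) : Decidable (InShape lam i j) := by
  unfold InShape; infer_instance

/-- A strict partition: strictly decreasing list of positive integers. -/
def IsStrictPartition (lam : List ℕ) : Prop :=
  List.Chain' (· > ·) lam ∧ ∀ x ∈ lam, 0 < x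

/-- A primed tableau of shape `lam` over `{1′ < 1 < 2′ < 2 < ⋯ < n}`.  The
primed letter `k′` is encoded as `2k−1` and the unprimed letter `k` as `2k`
(so the order of letters is the order of the encodings); `T` is an arbitrary
function whose values off the shifted diagram are irrelevant.  Rows and
columns weakly increase, each row has at most one `k′`, each column has at
most one `k`, and diagonal entries are unprimed. -/
def IsPrimedTableau (n : ℕ) (lam : List ℕ) (T : ℕ → ℕ → ℕ) : Prop :=
  (∀ i j, InShape lam i j → 1 ≤ T i j ∧ T i j ≤ 2 * n) ∧
  (∀ i j, InShape lam i j → InShape lam i (j + 1) → T i j ≤ T i (j + 1)) ∧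
  (∀ i j, InShape lam i j → InShape lam (i + 1) j → T i j ≤ T (i + 1) j) ∧
  (∀ i j j' k, InShape lam i j → InShape lam i j' →
    T i j = 2 * k + 1 → T i j' = 2 * k + 1 → j = j') ∧
  (∀ i i' j k, InShape lam i j → InShape lam i' j →
    T i j = 2 * k + 2 → T i' j = 2 * k + 2 → i = i') ∧
  (∀ i, InShape lam i i → T i i % 2 = 0)

/-- The cells of the shifted diagram of `lam`, as a finite set. -/
def cells (lam : List ℕ) : Finset (ℕ × ℕ) :=
  (Finset.range lam.length ×ˢ Finset.range (lam.foldr max 0 + lam.length)).filter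
    fun p => InShape lam p.1 p.2

/-- The number of entries of `T` equal to `k` or `k′`. -/
def wtPT (lam : List ℕ) (T : ℕ → ℕ → ℕ) (k : ℕ) : ℕ :=
  ((cells lam).filter fun p => T p.1 p.2 = 2 * k - 1 ∨ T p.1 p.2 = 2 * k).card

/-- Two cells are edge-adjacent. -/
def Adj (p q : ℕ × ℕ) : Prop :=
  (p.1 = q.1 ∧ (p.2 + 1 = q.2 ∨ q.2 + 1 = p.2)) ∨
  (p.2 = q.2 ∧ (p.1 + 1 = q.1 ∨ q.1 + 1 = p.1))

/-- A set of cells is edge-connected. -/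
def ConnectedSet (S : Finset (ℕ × ℕ)) : Prop :=
  ∀ p ∈ S, ∀ q ∈ S,
    Relation.ReflTransGen (fun a b => a ∈ S ∧ b ∈ S ∧ Adj a b) p q

/-- A set of cells contains no `2 × 2` square (border strip condition). -/
def No2x2 (S : Finset (ℕ × ℕ)) : Prop :=
  ∀ i j, ¬((i, j) ∈ S ∧ (i + 1, j) ∈ S ∧ (i, j + 1) ∈ S ∧ (i + 1, j + 1) ∈ S)

/-- The cells of `T` whose letter (primed or not) is `k`. -/
def letterCells (lam : List ℕ) (T : ℕ → ℕ → ℕ) (k : ℕ) : Finset (ℕ × ℕ) :=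
  (cells lam).filter fun p => T p.1 p.2 = 2 * k - 1 ∨ T p.1 p.2 = 2 * k

/-- `T` is the `q(n)`-lowest weight primed tableau of shape `lam`: a primed
tableau such that for each `1 ≤ i ≤ l = l(lam)`, the cells with letter
`n − l + i` (primed or unprimed) form a connected border strip of size
`λ_{l−i+1}` starting at the diagonal cell `(i,i)` with unprimed entry
`n − l + i` there.  (Cells are 0-based.) -/
def IsLowestPT (n : ℕ) (lam : List ℕ) (T : ℕ → ℕ → ℕ) : Prop :=
  IsPrimedTableau n lam T ∧
  ∀ i, 1 ≤ i → i ≤ lam.length →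
    (letterCells lam T (n - lam.length + i)).card = lam.getD (lam.length - i) 0 ∧
    ConnectedSet (letterCells lam T (n - lam.length + i)) ∧
    No2x2 (letterCells lam T (n - lam.length + i)) ∧
    (i - 1, i - 1) ∈ letterCells lam T (n - lam.length + i) ∧
    T (i - 1) (i - 1) = 2 * (n - lam.length + i)

def numPartsGt (lam : List ℕ) (t : ℕ) : ℕ := lam.countP (t < ·)

section Partition

variable {lam : List ℕ}

lemma numPartsGt_le_length (t : ℕ) : numPartsGt lam t ≤ lam.length :=
  List.countP_le_length

lemma numPartsGt_antitone : Antitone (numPartsGt lam) := fun _ _ hst =>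
  List.countP_mono_left fun _ _ h => by simp only [decide_eq_true_eq] at h ⊢; omega

lemma numPartsGt_zero (hpos : ∀ x ∈ lam, 0 < x) : numPartsGt lam 0 = lam.length :=
  List.countP_eq_length.mpr (by simpa using hpos)

lemma lt_getD_iff_lt_numPartsGt (hp : lam.Pairwise (· > ·)) (t j : ℕ) :
    t < lam.getD j 0 ↔ j < numPartsGt lam t := by
  induction lam generalizing j with
  | nil => simp [numPartsGt]
  | cons a tl ih =>
    obtain ⟨ha, htl⟩ := List.pairwise_cons.mp hp
    have hcount : numPartsGt (a :: tl) t = numPartsGt tl t + if t < a then 1 else 0 := by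
      simp [numPartsGt, List.countP_cons]
    by_cases hta : t < a
    · rw [hcount, if_pos hta]
      cases j with
      | zero => simpa using hta
      | succ j => rw [List.getD_cons_succ, ih htl]; omega
    · have hsmall : ∀ j, tl.getD j 0 ≤ t := fun j => by
        rcases lt_or_ge j tl.length with hj | hj
        · rw [List.getD_eq_getElem _ _ hj]
          have := ha _ (List.getElem_mem hj)
          omega
        · rw [List.getD_eq_default _ _ hj]; omega
      have h0 : numPartsGt tl t = 0 := by
        by_contra h
        have := (ih htl 0).mpr (by omega)
        have := hsmall 0
        omega
      rw [hcount, if_neg hta, h0]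
      cases j with
      | zero => simpa using hta
      | succ j => have := hsmall j; rw [List.getD_cons_succ]; omega

lemma getD_succ_lt_getD (hp : lam.Pairwise (· > ·)) {j : ℕ} (hj : j + 1 < lam.length) :
    lam.getD (j + 1) 0 < lam.getD j 0 := by
  rw [List.getD_eq_getElem _ _ hj, List.getD_eq_getElem _ _ (by omega)]
  exact List.pairwise_iff_getElem.mp hp j (j + 1) (by omega) hj (by omega)

lemma getD_succ_lt_getD_of_pos (hp : lam.Pairwise (· > ·)) (hpos : ∀ x ∈ lam, 0 < x) {j : ℕ}
    (hj : j < lam.length) : lam.getD (j + 1) 0 < lam.getD j 0 := by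
  rcases lt_or_ge (j + 1) lam.length with hj' | hj'
  · exact getD_succ_lt_getD hp hj'
  · rw [List.getD_eq_default _ _ hj', List.getD_eq_getElem _ _ hj]
    exact hpos _ (List.getElem_mem hj)

lemma numPartsGt_le_numPartsGt_add (hp : lam.Pairwise (· > ·)) (t d : ℕ) : numPartsGt lam t ≤ numPartsGt lam (t + d) + d := by
  induction d with
  | zero => simp
  | succ d ih =>
    rw [show t + (d + 1) = t + d + 1 by omega]
    suffices numPartsGt lam (t + d) ≤ numPartsGt lam (t + d + 1) + 1 by omega
    set m := numPartsGt lam (t + d)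
    have hm := numPartsGt_le_length (lam := lam) (t + d)
    by_contra! h
    have h1 := (lt_getD_iff_lt_numPartsGt hp (t + d) (m - 1)).mpr (by omega)
    have h2 := getD_succ_lt_getD hp (j := m - 2) (by omega)
    have h3 := (lt_getD_iff_lt_numPartsGt hp (t + d + 1) (m - 2)).mp
      (by rw [show m - 2 + 1 = m - 1 by omega] at h2; omega)
    omega

lemma lt_length_of_getD_ne_zero {j : ℕ} (h : lam.getD j 0 ≠ 0) : j < lam.length := by
  by_contra h'
  exact h (List.getD_eq_default _ _ (by omega))

lemma InShape.of_le_col {r c c' : ℕ} (h : InShape lam r c') (hrc : r ≤ c) (hc : c ≤ c') :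
    InShape lam r c :=
  ⟨h.1, hrc, by unfold InShape at h; omega⟩

lemma inShape_iff (hp : lam.Pairwise (· > ·)) {r c : ℕ} :
    InShape lam r c ↔ r ≤ c ∧ r < numPartsGt lam (c - r) := by
  have : lam.getD r 0 ≠ 0 → r < lam.length := lt_length_of_getD_ne_zero
  rw [← lt_getD_iff_lt_numPartsGt hp]
  unfold InShape
  omega

lemma InShape.of_le_row (hp : lam.Pairwise (· > ·)) {r r' c : ℕ}
    (h : InShape lam r' c) (hr : r ≤ r') : InShape lam r c := by
  rw [inShape_iff hp] at h ⊢
  have := numPartsGt_le_numPartsGt_add hp (c - r') (r' - r)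
  rw [show c - r' + (r' - r) = c - r by omega] at this
  omega

lemma mem_cells {r c : ℕ} : (r, c) ∈ cells lam ↔ InShape lam r c := by
  simp only [cells, Finset.mem_filter, Finset.mem_product, Finset.mem_range, and_iff_right_iff_imp]
  intro h
  have : lam.getD r 0 ≤ lam.foldr max 0 :=
    List.le_max_of_le' 0 (List.getD_eq_getElem _ _ h.1 ▸ List.getElem_mem h.1) le_rfl
  exact ⟨h.1, by unfold InShape at h; omega⟩

end Partition

section BorderStrip

open Finset Relation

variable {S : Finset (ℕ × ℕ)}

lemma Adj.symm {p q : ℕ × ℕ} (h : Adj p q) : Adj q p := by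
  unfold Adj at h ⊢; omega

lemma connectedSet_of_exists_adj_lt (f : ℕ × ℕ → ℕ) (b : ℕ × ℕ)
    (h : ∀ p ∈ S, p ≠ b → ∃ q ∈ S, Adj p q ∧ f q < f p) : ConnectedSet S := by
  have key : ∀ N, ∀ p ∈ S, f p < N →
      ReflTransGen (fun x y => x ∈ S ∧ y ∈ S ∧ Adj x y) p b ∧
      ReflTransGen (fun x y => x ∈ S ∧ y ∈ S ∧ Adj x y) b p := by
    intro N
    induction N with
    | zero => intro p _ h; omega
    | succ N ih =>
      intro p hp hN
      by_cases hpb : p = b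
      · subst hpb; exact ⟨.refl, .refl⟩
      obtain ⟨q, hq, hadj, hlt⟩ := h p hp hpb
      obtain ⟨hqb, hbq⟩ := ih q hq (by omega)
      exact ⟨.head ⟨hp, hq, hadj⟩ hqb, hbq.tail ⟨hq, hp, hadj.symm⟩⟩
  intro p hp q hq
  exact (key _ p hp (lt_add_one _)).1.trans (key _ q hq (lt_add_one _)).2

lemma ConnectedSet.exists_vertical_pair (hS : ConnectedSet S) {p q : ℕ × ℕ} (hp : p ∈ S)
    (hq : q ∈ S) {r : ℕ} (hqr : q.1 ≤ r) (hrp : r < p.1) :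
    ∃ c, (r, c) ∈ S ∧ (r + 1, c) ∈ S := by
  induction hS p hp q hq with
  | refl => omega
  | @tail x y _ hxy ih =>
    rcases le_or_gt x.1 r with hx | hx
    · exact ih hxy.1 hx
    · obtain ⟨hxS, hyS, hadj⟩ := hxy
      have hcol : x.1 = r + 1 ∧ y.2 = x.2 := by unfold Adj at hadj; omega
      refine ⟨y.2, ?_, ?_⟩
      · rwa [show r = y.1 by unfold Adj at hadj; omega]
      · rwa [← hcol.1, hcol.2]

lemma ConnectedSet.exists_mem_row (hS : ConnectedSet S) {p q : ℕ × ℕ} (hp : p ∈ S)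
    (hq : q ∈ S) {s : ℕ} (hps : p.1 ≤ s) (hsq : s ≤ q.1) : ∃ c, (s, c) ∈ S := by
  rcases eq_or_lt_of_le hsq with rfl | hlt
  · exact ⟨q.2, hq⟩
  · obtain ⟨c, hc, -⟩ := hS.exists_vertical_pair hq hp hps hlt
    exact ⟨c, hc⟩

variable {a b : ℕ → ℕ} {i : ℕ}

lemma card_add_sum_eq_sum_of_mem_iff (hS : ∀ r c, (r, c) ∈ S ↔ r ≤ c ∧ b r ≤ c - r ∧ c - r < a r)
    (hba : ∀ r, b r ≤ a r) (ha_zero : ∀ r, i < r → a r = 0) :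
    S.card + ∑ r ∈ range (i + 1), b r = ∑ r ∈ range (i + 1), a r := by
  have hrow : ∀ p ∈ S, p.1 ∈ range (i + 1) := fun p hp => by
    have := (hS p.1 p.2).mp hp
    have := ha_zero p.1
    rw [mem_range]
    by_contra
    omega
  rw [card_eq_sum_card_fiberwise hrow, ← sum_add_distrib]
  refine sum_congr rfl fun r _ => ?_
  have hfiber : S.filter (·.1 = r) =
      (Ico (b r) (a r)).image fun d => (r, r + d) := by
    ext ⟨r', c⟩
    simp only [mem_filter, hS, mem_image, mem_Ico, Prod.mk.injEq]
    constructor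
    · rintro ⟨⟨h1, h2, h3⟩, rfl⟩; exact ⟨c - r', ⟨h2, h3⟩, rfl, by omega⟩
    · rintro ⟨d, ⟨h1, h2⟩, rfl, rfl⟩; exact ⟨⟨by omega, by omega, by omega⟩, rfl⟩
  rw [hfiber, card_image_of_injective _ fun _ _ h => by simpa using h, Nat.card_Ico]
  have := hba r
  omega

/-- In a strip `b r ≤ c - r < a r` without `2 × 2` squares, each row ends where the strip
starts in the row above. -/
lemma succ_le_of_no2x2 (hS : ∀ r c, (r, c) ∈ S ↔ r ≤ c ∧ b r ≤ c - r ∧ c - r < a r)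
    (ha : ∀ r, 0 < a (r + 1) → a (r + 1) < a r) (ha_zero : ∀ r, i < r → a r = 0)
    (hb : ∀ r < i, b (r + 1) < b r) (h2x2 : No2x2 S) (r : ℕ) : a (r + 1) ≤ b r := by
  rcases le_or_gt i r with hir | hri
  · rw [ha_zero (r + 1) (by omega)]; omega
  by_contra! h
  have h1 := ha r (by omega)
  have h2 := hb r hri
  exact h2x2 r (r + b r) ⟨(hS _ _).mpr ⟨by omega, by omega, by omega⟩,
    (hS _ _).mpr ⟨by omega, by omega, by omega⟩, (hS _ _).mpr ⟨by omega, by omega, by omega⟩,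
    (hS _ _).mpr ⟨by omega, by omega, by omega⟩⟩

theorem rows_eq_of_connected_strip {m : ℕ}
    (hS : ∀ r c, (r, c) ∈ S ↔ r ≤ c ∧ b r ≤ c - r ∧ c - r < a r)
    (hba : ∀ r, b r ≤ a r) (ha : ∀ r, 0 < a (r + 1) → a (r + 1) < a r)
    (ha_zero : ∀ r, i < r → a r = 0) (hb : ∀ r < i, b (r + 1) < b r)
    (hb_zero : ∀ r, i ≤ r → b r = 0) (hm : b 0 < m) (hcard : S.card = m)
    (hconn : ConnectedSet S) (h2x2 : No2x2 S) (hdiag : (i, i) ∈ S) :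
    a 0 = m ∧ ∀ r, a (r + 1) = b r := by
  have hsum := card_add_sum_eq_sum_of_mem_iff hS hba ha_zero
  rw [sum_range_succ' a, sum_range_succ b, hb_zero i le_rfl, hcard] at hsum
  have hle := succ_le_of_no2x2 hS ha ha_zero hb h2x2
  have hsum_le : ∑ r ∈ range i, a (r + 1) ≤ ∑ r ∈ range i, b r := sum_le_sum fun r _ => hle r
  -- counting gives `m ≤ a 0`, so row `0` of the strip is nonempty
  have hrow0 : (0, b 0) ∈ S := (hS _ _).mpr ⟨by omega, by omega, by omega⟩
  have hrows : ∀ s ≤ i, b s < a s := fun s hs => by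
    obtain ⟨c, hc⟩ := hconn.exists_mem_row hrow0 hdiag (Nat.zero_le s) hs
    have := (hS s c).mp hc
    omega
  have heq : ∀ r, a (r + 1) = b r := fun r => by
    refine le_antisymm (hle r) ?_
    rcases le_or_gt i r with hir | hri
    · rw [hb_zero r hir]; exact Nat.zero_le _
    have hlow : (r + 1, r + 1 + b (r + 1)) ∈ S := by
      have := hrows (r + 1) hri
      exact (hS _ _).mpr ⟨by omega, by omega, by omega⟩
    have hup : (r, r + b r) ∈ S := by
      have := hrows r hri.le
      exact (hS _ _).mpr ⟨by omega, by omega, by omega⟩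
    obtain ⟨c, hc, hc'⟩ := hconn.exists_vertical_pair (r := r) hlow hup le_rfl (Nat.lt_succ_self r)
    have := (hS _ _).mp hc
    have := (hS _ _).mp hc'
    omega
  refine ⟨?_, heq⟩
  rw [sum_congr rfl fun r _ => heq r] at hsum
  eta_reduce at hsum
  omega

end BorderStrip

section PrimedTableau

open Finset

variable {n : ℕ} {lam : List ℕ} {T : ℕ → ℕ → ℕ}

lemma lt_card_filter_range_iff {p : ℕ → Prop} [DecidablePred p] {N d : ℕ}
    (hp : ∀ a b, a ≤ b → b < N → p b → p a) (hd : d < N) :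
    d < ((range N).filter p).card ↔ p d := by
  constructor
  · intro h
    by_contra hpd
    have hsub : (range N).filter p ⊆ range d := fun e he => by
      simp only [mem_filter, mem_range] at he ⊢
      by_contra hed
      exact hpd (hp d e (by omega) he.1 he.2)
    have := card_le_card hsub
    rw [card_range] at this
    omega
  · intro hpd
    have hsub : range (d + 1) ⊆ (range N).filter p := fun e he => by
      simp only [mem_filter, mem_range] at he ⊢
      exact ⟨by omega, hp e d (by omega) hd hpd⟩
    have := card_le_card hsub
    rw [card_range] at this
    omega

def letter (T : ℕ → ℕ → ℕ) (r c : ℕ) : ℕ := (T r c + 1) / 2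

lemma letter_eq_iff {r c k : ℕ} : letter T r c = k ↔ T r c = 2 * k - 1 ∨ T r c = 2 * k := by
  unfold letter; omega

lemma mem_letterCells {k r c : ℕ} :
    (r, c) ∈ letterCells lam T k ↔ InShape lam r c ∧ letter T r c = k := by
  rw [letterCells, mem_filter, mem_cells, letter_eq_iff]

/-- The length of row `r` of the subtableau of entries with letter at most `k`. -/
def rowCount (lam : List ℕ) (T : ℕ → ℕ → ℕ) (k r : ℕ) : ℕ :=
  ((range (lam.getD r 0)).filter fun d => letter T r (r + d) ≤ k).card

lemma rowCount_le (lam : List ℕ) (T : ℕ → ℕ → ℕ) (k r : ℕ) :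
    rowCount lam T k r ≤ lam.getD r 0 :=
  (card_filter_le _ _).trans (card_range _).le

lemma rowCount_mono {k k' : ℕ} (hk : k ≤ k') (r : ℕ) :
    rowCount lam T k r ≤ rowCount lam T k' r :=
  card_le_card fun d hd => by
    simp only [mem_filter] at hd ⊢
    exact ⟨hd.1, hd.2.trans hk⟩

namespace IsPrimedTableau

lemma row_mono (hT : IsPrimedTableau n lam T) {r c c' : ℕ} (h : InShape lam r c')
    (hrc : r ≤ c) (hcc' : c ≤ c') : T r c ≤ T r c' := by
  induction c', hcc' using Nat.le_induction with
  | base => rfl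
  | succ c' hcc' ih =>
    have h' := h.of_le_col (by omega) (Nat.le_succ c')
    exact (ih h').trans (hT.2.1 r c' h' h)

lemma letter_le_of_le (hT : IsPrimedTableau n lam T) {r c c' : ℕ} (h : InShape lam r c')
    (hrc : r ≤ c) (hcc' : c ≤ c') : letter T r c ≤ letter T r c' :=
  Nat.div_le_div_right (by have := hT.row_mono h hrc hcc'; omega)

lemma letter_le_iff_lt_rowCount (hT : IsPrimedTableau n lam T) {r c : ℕ} (h : InShape lam r c)
    (k : ℕ) : letter T r c ≤ k ↔ c - r < rowCount lam T k r := by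
  obtain ⟨hr, hrc, hc⟩ := h
  rw [rowCount, lt_card_filter_range_iff (fun a b hab hb hpb => ?_) (by omega),
    Nat.add_sub_cancel' hrc]
  exact (hT.letter_le_of_le ⟨hr, by omega, by omega⟩ (by omega) (by omega)).trans hpb

lemma rowCount_succ_lt (hp : lam.Pairwise (· > ·)) (hT : IsPrimedTableau n lam T) {k r : ℕ}
    (h : 0 < rowCount lam T k (r + 1)) : rowCount lam T k (r + 1) < rowCount lam T k r := by
  set a := rowCount lam T k (r + 1)
  have hle := rowCount_le lam T k (r + 1)
  have hin : InShape lam (r + 1) (r + a) :=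
    ⟨lt_length_of_getD_ne_zero (by omega), by omega, by omega⟩
  have hup : InShape lam r (r + a) := hin.of_le_row hp (Nat.le_succ r)
  have h1 := (hT.letter_le_iff_lt_rowCount hin k).mpr (by omega)
  have h2 : letter T r (r + a) ≤ letter T (r + 1) (r + a) :=
    Nat.div_le_div_right (by have := hT.2.2.1 _ _ hup hin; omega)
  have := (hT.letter_le_iff_lt_rowCount hup k).mp (h2.trans h1)
  omega

lemma mem_letterCells_succ_iff (hT : IsPrimedTableau n lam T) {k r c : ℕ} :
    (r, c) ∈ letterCells lam T (k + 1) ↔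
      r ≤ c ∧ rowCount lam T k r ≤ c - r ∧ c - r < rowCount lam T (k + 1) r := by
  rw [mem_letterCells]
  constructor
  · rintro ⟨h, hl⟩
    have h1 := (hT.letter_le_iff_lt_rowCount h k).not.mp (by omega)
    have h2 := (hT.letter_le_iff_lt_rowCount h (k + 1)).mp (by omega)
    exact ⟨h.2.1, by omega, h2⟩
  · rintro ⟨hrc, h1, h2⟩
    have hle := rowCount_le lam T (k + 1) r
    have h : InShape lam r c := ⟨lt_length_of_getD_ne_zero (by omega), hrc, by omega⟩
    have := (hT.letter_le_iff_lt_rowCount h k).not.mpr (by omega)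
    have := (hT.letter_le_iff_lt_rowCount h (k + 1)).mpr h2
    exact ⟨h, by omega⟩

lemma eq_two_mul_letter_sub_one_of_below (hT : IsPrimedTableau n lam T) {r c : ℕ}
    (h : InShape lam r c) (h' : InShape lam (r + 1) c) (hl : letter T (r + 1) c = letter T r c) :
    T r c = 2 * letter T r c - 1 := by
  have hcol := hT.2.2.1 r c h h'
  have hpos := (hT.1 r c h).1
  by_contra hne
  have := hT.2.2.2.2.1 r (r + 1) c (letter T r c - 1) h h'
    (by unfold letter at *; omega) (by unfold letter at *; omega)
  omega

lemma eq_two_mul_letter_of_left (hT : IsPrimedTableau n lam T) {r c : ℕ}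
    (h : InShape lam r c) (h' : InShape lam r (c + 1)) (hl : letter T r c = letter T r (c + 1)) :
    T r (c + 1) = 2 * letter T r (c + 1) := by
  have hrow := hT.2.1 r c h h'
  have hpos := (hT.1 r c h).1
  by_contra hne
  have := hT.2.2.2.1 r c (c + 1) (letter T r c - 1) h h'
    (by unfold letter at *; omega) (by unfold letter at *; omega)
  omega

lemma eq_two_mul_letter_diag (hT : IsPrimedTableau n lam T) {r : ℕ} (h : InShape lam r r) :
    T r r = 2 * letter T r r := by
  have := hT.2.2.2.2.2 r h
  unfold letter
  omega

end IsPrimedTableau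

end PrimedTableau

section LowestTableau

open Finset

variable {n : ℕ} {lam : List ℕ}

/-- Cell `(r, c)` gets letter `n - L + i` exactly when `λ_{L-i+1+r} ≤ c - r < λ_{L-i+r}`
(see `lowestLetter_le_iff`). -/
def lowestLetter (n : ℕ) (lam : List ℕ) (r c : ℕ) : ℕ :=
  n + 1 + r - numPartsGt lam (c - r)

def LowestPrimed (n : ℕ) (lam : List ℕ) (r c : ℕ) : Prop :=
  InShape lam (r + 1) c ∧ lowestLetter n lam (r + 1) c = lowestLetter n lam r c

instance (n : ℕ) (lam : List ℕ) (r c : ℕ) : Decidable (LowestPrimed n lam r c) := by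
  unfold LowestPrimed; infer_instance

def lowestPT (n : ℕ) (lam : List ℕ) (r c : ℕ) : ℕ :=
  2 * lowestLetter n lam r c - if LowestPrimed n lam r c then 1 else 0

lemma letter_lowestPT (r c : ℕ) : letter (lowestPT n lam) r c = lowestLetter n lam r c := by
  unfold letter lowestPT
  split_ifs <;> omega

lemma lowestPT_of_lowestPrimed {r c : ℕ} (h : LowestPrimed n lam r c) :
    lowestPT n lam r c = 2 * lowestLetter n lam r c - 1 := by
  rw [lowestPT, if_pos h]

lemma lowestPT_of_not_lowestPrimed {r c : ℕ} (h : ¬ LowestPrimed n lam r c) :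
    lowestPT n lam r c = 2 * lowestLetter n lam r c := by
  rw [lowestPT, if_neg h, Nat.sub_zero]

lemma lowestLetter_le_iff (hp : lam.Pairwise (· > ·)) (hln : lam.length ≤ n) {i r c : ℕ}
    (hi : i ≤ lam.length) :
    lowestLetter n lam r c ≤ n - lam.length + i ↔ c - r < lam.getD (lam.length - i + r) 0 := by
  have := numPartsGt_le_length (lam := lam) (c - r)
  rw [lt_getD_iff_lt_numPartsGt hp, lowestLetter]
  omega

lemma lowestLetter_bounds (hp : lam.Pairwise (· > ·)) (hln : lam.length ≤ n) {r c : ℕ}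
    (h : InShape lam r c) :
    n - lam.length + r < lowestLetter n lam r c ∧ lowestLetter n lam r c ≤ n := by
  have := numPartsGt_le_length (lam := lam) (c - r)
  rw [inShape_iff hp] at h
  unfold lowestLetter
  omega

lemma lowestLetter_mono_right {r c c' : ℕ} (h : c ≤ c') :
    lowestLetter n lam r c ≤ lowestLetter n lam r c' := by
  have := numPartsGt_antitone (lam := lam) (show c - r ≤ c' - r by omega)
  unfold lowestLetter
  omega

lemma lowestLetter_le_of_le_row (hp : lam.Pairwise (· > ·)) (hln : lam.length ≤ n)
    {r r' c : ℕ} (hr : r ≤ r') (hrc : r' ≤ c) :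
    lowestLetter n lam r c ≤ lowestLetter n lam r' c := by
  have := numPartsGt_le_length (lam := lam) (c - r')
  have := numPartsGt_le_numPartsGt_add hp (c - r') (r' - r)
  rw [show c - r' + (r' - r) = c - r by omega] at this
  unfold lowestLetter
  omega

lemma lowestLetter_succ_row_le {r c : ℕ} (hrc : r + 1 ≤ c) :
    lowestLetter n lam (r + 1) c ≤ lowestLetter n lam r c + 1 := by
  have := numPartsGt_antitone (lam := lam) (show c - (r + 1) ≤ c - r by omega)
  unfold lowestLetter
  omega

lemma lowestLetter_left_eq_of_not_lowestPrimed (hp : lam.Pairwise (· > ·))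
    (hln : lam.length ≤ n) {r c : ℕ} (h : InShape lam r (c + 1)) (hrc : r ≤ c)
    (hnp : ¬ LowestPrimed n lam r (c + 1)) :
    lowestLetter n lam r c = lowestLetter n lam r (c + 1) := by
  rw [inShape_iff hp] at h
  have hanti := numPartsGt_antitone (lam := lam) (show c - r ≤ c + 1 - r by omega)
  have hstep := numPartsGt_le_numPartsGt_add hp (c - r) 1
  have := numPartsGt_le_length (lam := lam) (c - r)
  rw [show c - r + 1 = c + 1 - r by omega] at hstep
  unfold LowestPrimed at hnp
  rw [inShape_iff hp, lowestLetter, lowestLetter, Nat.add_sub_add_right] at hnp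
  unfold lowestLetter
  omega

lemma not_lowestPrimed_of_left_eq (hln : lam.length ≤ n) {r c : ℕ}
    (hl : lowestLetter n lam r c = lowestLetter n lam r (c + 1)) :
    ¬ LowestPrimed n lam r (c + 1) := by
  rintro ⟨-, hbelow⟩
  have := numPartsGt_le_length (lam := lam) (c - r)
  have := numPartsGt_le_length (lam := lam) (c + 1 - r)
  unfold lowestLetter at hl hbelow
  rw [Nat.add_sub_add_right] at hbelow
  omega

lemma not_lowestPrimed_diag (r : ℕ) : ¬ LowestPrimed n lam r r := fun h => by
  have := h.1.2.1
  omega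

lemma isPrimedTableau_lowestPT (hp : lam.Pairwise (· > ·)) (hln : lam.length ≤ n) :
    IsPrimedTableau n lam (lowestPT n lam) := by
  refine ⟨fun r c h => ?_, fun r c h h' => ?_, fun r c h h' => ?_, fun r j j' k h h' hv hv' => ?_,
    fun r r' c k h h' hv hv' => ?_, fun r _ => ?_⟩
  · have := lowestLetter_bounds hp hln h
    unfold lowestPT
    split_ifs <;> omega
  · rcases (lowestLetter_mono_right (n := n) (lam := lam) (r := r) (c.le_add_right 1)).lt_or_eq
      with hlt | heq
    · unfold lowestPT; split_ifs <;> omega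
    · rw [lowestPT_of_not_lowestPrimed (not_lowestPrimed_of_left_eq hln heq), ← heq]
      unfold lowestPT; split_ifs <;> omega
  · have h1 := lowestLetter_le_of_le_row (n := n) hp hln (r.le_add_right 1) h'.2.1
    have h2 := lowestLetter_succ_row_le (n := n) (lam := lam) h'.2.1
    by_cases heq : lowestLetter n lam (r + 1) c = lowestLetter n lam r c
    · rw [lowestPT_of_lowestPrimed ⟨h', heq⟩, ← heq]
      unfold lowestPT; split_ifs <;> omega
    · unfold lowestPT; split_ifs <;> omega
  · wlog hjj : j < j' generalizing j j' with H
    · rcases (not_lt.mp hjj).lt_or_eq with hlt | heq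
      · exact (H j' j h' h hv' hv hlt).symm
      · exact heq.symm
    have primed : ∀ c, lowestPT n lam r c = 2 * k + 1 →
        LowestPrimed n lam r c ∧ lowestLetter n lam r c = k + 1 := fun c hc => by
      by_cases hpr : LowestPrimed n lam r c
      · rw [lowestPT_of_lowestPrimed hpr] at hc; exact ⟨hpr, by omega⟩
      · rw [lowestPT_of_not_lowestPrimed hpr] at hc; omega
    obtain ⟨-, hj⟩ := primed j hv
    obtain ⟨j', rfl⟩ : ∃ c, j' = c + 1 := ⟨j' - 1, by omega⟩
    obtain ⟨hj'p, hj'⟩ := primed _ hv'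
    have h1 := lowestLetter_mono_right (n := n) (lam := lam) (r := r) (show j ≤ j' by omega)
    have h2 := lowestLetter_mono_right (n := n) (lam := lam) (r := r) (j'.le_add_right 1)
    exact absurd hj'p (not_lowestPrimed_of_left_eq hln (by omega))
  · wlog hrr : r < r' generalizing r r' with H
    · rcases (not_lt.mp hrr).lt_or_eq with hlt | heq
      · exact (H r' r h' h hv' hv hlt).symm
      · exact heq.symm
    have unprimed : ∀ s, lowestPT n lam s c = 2 * k + 2 →
        ¬ LowestPrimed n lam s c ∧ lowestLetter n lam s c = k + 1 := fun s hc => by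
      by_cases hpr : LowestPrimed n lam s c
      · rw [lowestPT_of_lowestPrimed hpr] at hc; omega
      · rw [lowestPT_of_not_lowestPrimed hpr] at hc; exact ⟨hpr, by omega⟩
    obtain ⟨hnp, hr⟩ := unprimed r hv
    obtain ⟨-, hr'⟩ := unprimed r' hv'
    have hbelow : InShape lam (r + 1) c := h'.of_le_row hp hrr
    have h1 := lowestLetter_le_of_le_row (n := n) (r := r) (r' := r + 1) hp hln (by omega) hbelow.2.1
    have h2 := lowestLetter_le_of_le_row (n := n) (r := r + 1) hp hln hrr h'.2.1
    exact absurd ⟨hbelow, by omega⟩ hnp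
  · rw [lowestPT_of_not_lowestPrimed (not_lowestPrimed_diag r)]
    omega

lemma mem_letterCells_lowestPT (hp : lam.Pairwise (· > ·)) (hln : lam.length ≤ n) {i r c : ℕ}
    (hi : i ≤ lam.length) :
    (r, c) ∈ letterCells lam (lowestPT n lam) (n - lam.length + i) ↔
      r ≤ c ∧ numPartsGt lam (c - r) = lam.length - i + 1 + r := by
  have := numPartsGt_le_length (lam := lam) (c - r)
  rw [mem_letterCells, letter_lowestPT, inShape_iff hp, lowestLetter]
  omega

/-- A border strip meets each diagonal `c - r = d` with `d < λ_{L-i}` exactly once. -/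
lemma card_letterCells_lowestPT (hp : lam.Pairwise (· > ·)) (hln : lam.length ≤ n) {i : ℕ}
    (hi : i ≤ lam.length) :
    (letterCells lam (lowestPT n lam) (n - lam.length + i)).card =
      lam.getD (lam.length - i) 0 := by
  rw [← card_range (lam.getD (lam.length - i) 0)]
  refine card_nbij' (fun p => p.2 - p.1)
    (fun d => (numPartsGt lam d - (lam.length - i + 1),
      numPartsGt lam d - (lam.length - i + 1) + d)) ?_ ?_ ?_ ?_
  · rintro ⟨r, c⟩ h
    rw [mem_coe, mem_letterCells_lowestPT hp hln hi] at h
    rw [mem_coe, mem_range, lt_getD_iff_lt_numPartsGt hp]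
    dsimp only
    omega
  · intro d hd
    rw [mem_coe, mem_range, lt_getD_iff_lt_numPartsGt hp] at hd
    rw [mem_coe, mem_letterCells_lowestPT hp hln hi, Nat.add_sub_cancel_left]
    omega
  · rintro ⟨r, c⟩ h
    rw [mem_coe, mem_letterCells_lowestPT hp hln hi] at h
    simp only [Prod.mk.injEq]
    omega
  · intro d _
    simp only [Nat.add_sub_cancel_left]

lemma connectedSet_letterCells_lowestPT (hp : lam.Pairwise (· > ·)) (hpos : ∀ x ∈ lam, 0 < x)
    (hln : lam.length ≤ n) {i : ℕ} (hi : i ≤ lam.length) :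
    ConnectedSet (letterCells lam (lowestPT n lam) (n - lam.length + i)) := by
  refine connectedSet_of_exists_adj_lt (fun p => p.2 - p.1) (i - 1, i - 1) ?_
  rintro ⟨r, c⟩ h hne
  rw [mem_letterCells_lowestPT hp hln hi] at h
  have hrc : r < c := by
    refine h.1.lt_of_ne fun hrc => hne ?_
    rw [← hrc, Nat.sub_self, numPartsGt_zero hpos] at h
    rw [← hrc, show r = i - 1 by omega]
  obtain ⟨c, rfl⟩ : ∃ c', c = c' + 1 := ⟨c - 1, by omega⟩
  have hanti := numPartsGt_antitone (lam := lam) (show c - r ≤ c + 1 - r by omega)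
  have hstep := numPartsGt_le_numPartsGt_add hp (c - r) 1
  rw [show c - r + 1 = c + 1 - r by omega] at hstep
  by_cases hleft : numPartsGt lam (c - r) = numPartsGt lam (c + 1 - r)
  · refine ⟨(r, c), (mem_letterCells_lowestPT hp hln hi).mpr ⟨by omega, by omega⟩, ?_, ?_⟩
    · unfold Adj; omega
    · dsimp only; omega
  · refine ⟨(r + 1, c + 1), (mem_letterCells_lowestPT hp hln hi).mpr ⟨by omega, ?_⟩, ?_, ?_⟩
    · rw [Nat.add_sub_add_right]; omega
    · unfold Adj; omega
    · dsimp only; omega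

lemma no2x2_letterCells_lowestPT (hp : lam.Pairwise (· > ·)) (hln : lam.length ≤ n) {i : ℕ}
    (hi : i ≤ lam.length) : No2x2 (letterCells lam (lowestPT n lam) (n - lam.length + i)) := by
  rintro r c ⟨h1, -, -, h4⟩
  rw [mem_letterCells_lowestPT hp hln hi] at h1 h4
  rw [Nat.add_sub_add_right] at h4
  omega

lemma isLowestPT_lowestPT (hp : lam.Pairwise (· > ·)) (hpos : ∀ x ∈ lam, 0 < x)
    (hln : lam.length ≤ n) : IsLowestPT n lam (lowestPT n lam) := by
  refine ⟨isPrimedTableau_lowestPT hp hln, fun i hi1 hi => ⟨card_letterCells_lowestPT hp hln hi,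
    connectedSet_letterCells_lowestPT hp hpos hln hi, no2x2_letterCells_lowestPT hp hln hi,
    ?_, ?_⟩⟩
  · rw [mem_letterCells_lowestPT hp hln hi, Nat.sub_self, numPartsGt_zero hpos]
    omega
  · rw [lowestPT_of_not_lowestPrimed (not_lowestPrimed_diag _), lowestLetter, Nat.sub_self,
      numPartsGt_zero hpos]
    omega

lemma wtPT_lowestPT (hp : lam.Pairwise (· > ·)) (hln : lam.length ≤ n) {k : ℕ} (hk : k ≤ n) :
    wtPT lam (lowestPT n lam) k = lam.getD (n - k) 0 := by
  change (letterCells lam (lowestPT n lam) k).card = _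
  rcases le_or_gt k (n - lam.length) with hk' | hk'
  · rw [List.getD_eq_default _ _ (by omega), card_eq_zero, eq_empty_iff_forall_notMem]
    rintro ⟨r, c⟩ h
    rw [mem_letterCells, letter_lowestPT] at h
    have := lowestLetter_bounds hp hln h.1
    omega
  · obtain ⟨i, rfl⟩ : ∃ i, k = n - lam.length + i := ⟨k - (n - lam.length), by omega⟩
    rw [card_letterCells_lowestPT hp hln (by omega)]
    congr 1
    omega

end LowestTableau

namespace IsLowestPT

variable {n : ℕ} {lam : List ℕ} {T : ℕ → ℕ → ℕ}

lemma letter_diag (hL : IsLowestPT n lam T) {r : ℕ} (hr : r < lam.length) :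
    letter T r r = n - lam.length + r + 1 := by
  have := (hL.2 (r + 1) (by omega) (by omega)).2.2.2.2
  rw [Nat.add_sub_cancel] at this
  unfold letter
  omega

lemma le_letter (hL : IsLowestPT n lam T) {r c : ℕ} (h : InShape lam r c) :
    n - lam.length + r + 1 ≤ letter T r c := by
  rw [← hL.letter_diag h.1]
  exact hL.1.letter_le_of_le h le_rfl h.2.1

lemma rowCount_eq_zero (hL : IsLowestPT n lam T) {k r : ℕ} (hk : k ≤ n - lam.length + r) :
    rowCount lam T k r = 0 := by
  by_contra h
  have hle := rowCount_le lam T k r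
  have hr : r < lam.length := lt_length_of_getD_ne_zero (by omega)
  have := (hL.1.letter_le_iff_lt_rowCount ⟨hr, le_rfl, by omega⟩ k).mpr (by omega)
  have := hL.letter_diag hr
  omega

lemma rowCount_eq (hp : lam.Pairwise (· > ·)) (hpos : ∀ x ∈ lam, 0 < x)
    (hL : IsLowestPT n lam T) :
    ∀ i ≤ lam.length, ∀ r, rowCount lam T (n - lam.length + i) r = lam.getD (lam.length - i + r) 0
  | 0, _, r => by
    rw [hL.rowCount_eq_zero (by omega), List.getD_eq_default _ _ (by omega)]
  | i + 1, hi, r => by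
    have hb := hL.rowCount_eq hp hpos i (by omega)
    obtain ⟨hcard, hconn, h2x2, hdiag, -⟩ := hL.2 (i + 1) (by omega) (by omega)
    rw [Nat.add_sub_cancel] at hdiag
    rw [← add_assoc] at hcard hconn h2x2 hdiag
    obtain ⟨h0, hsucc⟩ := rows_eq_of_connected_strip
      (a := rowCount lam T (n - lam.length + i + 1)) (b := rowCount lam T (n - lam.length + i))
      (fun _ _ => hL.1.mem_letterCells_succ_iff)
      (fun _ => rowCount_mono (Nat.le_succ _) _) (fun _ => hL.1.rowCount_succ_lt hp)
      (fun _ hr => hL.rowCount_eq_zero (by omega))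
      (fun r hr => by
        rw [hb, hb, ← add_assoc]
        exact getD_succ_lt_getD_of_pos hp hpos (by omega))
      (fun r hr => by rw [hb, List.getD_eq_default _ _ (by omega)])
      (by
        rw [hb, add_zero, show lam.length - i = lam.length - (i + 1) + 1 by omega]
        exact getD_succ_lt_getD_of_pos hp hpos (by omega))
      hcard hconn h2x2 hdiag
    show rowCount lam T (n - lam.length + i + 1) r = _
    cases r with
    | zero => exact h0
    | succ r => rw [hsucc, hb]; congr 1; omega

lemma letter_le_iff (hp : lam.Pairwise (· > ·)) (hpos : ∀ x ∈ lam, 0 < x)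
    (hL : IsLowestPT n lam T) {i r c : ℕ} (h : InShape lam r c) (hi : i ≤ lam.length) :
    letter T r c ≤ n - lam.length + i ↔ c - r < lam.getD (lam.length - i + r) 0 := by
  rw [hL.1.letter_le_iff_lt_rowCount h, hL.rowCount_eq hp hpos i hi]

lemma letter_eq_lowestLetter (hp : lam.Pairwise (· > ·)) (hpos : ∀ x ∈ lam, 0 < x)
    (hln : lam.length ≤ n) (hL : IsLowestPT n lam T) {r c : ℕ} (h : InShape lam r c) :
    letter T r c = lowestLetter n lam r c := by
  have hlow := hL.le_letter h
  have hhigh : letter T r c ≤ n := by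
    have := (hL.1.1 r c h).2
    unfold letter
    omega
  have h0 := lowestLetter_bounds hp hln h
  have key : ∀ i ≤ lam.length,
      (letter T r c ≤ n - lam.length + i ↔ lowestLetter n lam r c ≤ n - lam.length + i) :=
    fun i hi => by rw [hL.letter_le_iff hp hpos h hi, lowestLetter_le_iff hp hln hi]
  have k1 := key (letter T r c - (n - lam.length)) (by omega)
  have k2 := key (lowestLetter n lam r c - (n - lam.length)) (by omega)
  omega

/-- With the letters known, a cell above one of the same letter must be primed (columns hold
at most one `k`) and a cell right of one of the same letter unprimed (rows hold at most one `k′`);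
every cell of the lowest tableau is of one of these kinds or diagonal. -/
lemma eq_lowestPT (hp : lam.Pairwise (· > ·)) (hpos : ∀ x ∈ lam, 0 < x)
    (hln : lam.length ≤ n) (hL : IsLowestPT n lam T) {r c : ℕ} (h : InShape lam r c) :
    T r c = lowestPT n lam r c := by
  have hl := hL.letter_eq_lowestLetter hp hpos hln h
  by_cases hpr : LowestPrimed n lam r c
  · rw [lowestPT_of_lowestPrimed hpr, ← hl]
    refine hL.1.eq_two_mul_letter_sub_one_of_below h hpr.1 ?_
    rw [hl, hL.letter_eq_lowestLetter hp hpos hln hpr.1, hpr.2]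
  rw [lowestPT_of_not_lowestPrimed hpr, ← hl]
  rcases h.2.1.lt_or_eq with hrc | rfl
  · obtain ⟨c, rfl⟩ : ∃ c', c = c' + 1 := ⟨c - 1, by omega⟩
    have h' : InShape lam r c := h.of_le_col (by omega) (c.le_add_right 1)
    refine hL.1.eq_two_mul_letter_of_left h' h ?_
    rw [hl, hL.letter_eq_lowestLetter hp hpos hln h',
      lowestLetter_left_eq_of_not_lowestPrimed hp hln h (by omega) hpr]
  · exact hL.1.eq_two_mul_letter_diag h

end IsLowestPT

/-- The lowest weight primed tableau of shape `lam` exists, has weight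
`(0,…,0,λₗ,…,λ₁)`, and its entries are uniquely determined by the border strip
conditions. -/
theorem stmt15 (n : ℕ) (lam : List ℕ)
    (hlam : IsStrictPartition lam) (hln : lam.length ≤ n) :
    (∃ T, IsLowestPT n lam T ∧
      ∀ k, 1 ≤ k → k ≤ n → wtPT lam T k = lam.getD (n - k) 0) ∧
    (∀ T T', IsLowestPT n lam T → IsLowestPT n lam T' →
      ∀ i j, InShape lam i j → T i j = T' i j) := by
  obtain ⟨hchain, hpos⟩ := hlam
  have hp : lam.Pairwise (· > ·) := List.isChain_iff_pairwise.mp hchain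
  refine ⟨⟨lowestPT n lam, isLowestPT_lowestPT hp hpos hln,
    fun k _ hk => wtPT_lowestPT hp hln hk⟩, fun T T' hT hT' i j h => ?_⟩
  rw [hT.eq_lowestPT hp hpos hln h, hT'.eq_lowestPT hp hpos hln h]
end
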